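/- If f : X → Y is a surjective strongly θ-continuous map and X is θ-Hurewicz, then Y is Hurewicz. -/

import Mathlib

open Filter Topology Set

def AlphaOpen {X : Type*} [TopologicalSpace X] (A : Set X) : Prop :=
  A ⊆ interior (closure (interior A))

def ThetaOpen {X : Type*} [TopologicalSpace X] (A : Set X) : Prop :=
  ∀ x ∈ A, ∃ B : Set X, IsOpen B ∧ x ∈ B ∧ closure B ⊆ A

def SemiOpen {X : Type*} [TopologicalSpace X] (A : Set X) : Prop :=
  A ⊆ closure (interior A)

/-- Generic Hurewicz-type selection principle for covers by sets satisfying `P`. -/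
def HurewiczFor (X : Type*) [TopologicalSpace X] (P : Set X → Prop) : Prop :=
  ∀ 𝒜 : ℕ → Set (Set X),
    (∀ k, (∀ U ∈ 𝒜 k, P U) ∧ ⋃₀ 𝒜 k = Set.univ) →
    ∃ ℬ : ℕ → Set (Set X),
      (∀ k, ℬ k ⊆ 𝒜 k ∧ (ℬ k).Finite) ∧
      ∀ x : X, ∀ᶠ k in Filter.atTop, x ∈ ⋃₀ ℬ k

def Hurewicz (X : Type*) [TopologicalSpace X] : Prop := HurewiczFor X IsOpen
def AlphaHurewicz (X : Type*) [TopologicalSpace X] : Prop := HurewiczFor X AlphaOpen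
def ThetaHurewicz (X : Type*) [TopologicalSpace X] : Prop := HurewiczFor X ThetaOpen
def MildlyHurewicz (X : Type*) [TopologicalSpace X] : Prop := HurewiczFor X IsClopen
def SemiHurewicz (X : Type*) [TopologicalSpace X] : Prop := HurewiczFor X SemiOpen

/-! A strongly θ-continuous map pulls open sets back to θ-open sets. So a sequence of open
covers of `Y` pulls back to θ-open covers of `X`; the finite subfamilies selected there push
forward to finite subfamilies of the original covers, since `f '' (f ⁻¹' B) = B` for
surjective `f`. -/

def StronglyThetaContinuous {X Y : Type*} [TopologicalSpace X] [TopologicalSpace Y]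
    (f : X → Y) : Prop :=
  ∀ (x : X) (B : Set Y), IsOpen B → f x ∈ B →
    ∃ A : Set X, IsOpen A ∧ x ∈ A ∧ f '' closure A ⊆ B

theorem StronglyThetaContinuous.thetaOpen_preimage {X Y : Type*} [TopologicalSpace X]
    [TopologicalSpace Y] {f : X → Y} (hc : StronglyThetaContinuous f) {B : Set Y}
    (hB : IsOpen B) : ThetaOpen (f ⁻¹' B) := by
  intro x hx
  obtain ⟨A, hA, hxA, hAB⟩ := hc x B hB hx
  exact ⟨A, hA, hxA, image_subset_iff.mp hAB⟩

theorem HurewiczFor.of_surjective {X Y : Type*} [TopologicalSpace X] [TopologicalSpace Y]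
    {P : Set X → Prop} {Q : Set Y → Prop} {f : X → Y} (hf : Function.Surjective f)
    (hPQ : ∀ B, Q B → P (f ⁻¹' B)) (h : HurewiczFor X P) : HurewiczFor Y Q := by
  intro 𝒜 h𝒜
  have hpull : ∀ k, (∀ U ∈ preimage f '' 𝒜 k, P U) ∧ ⋃₀ (preimage f '' 𝒜 k) = univ := by
    refine fun k => ⟨?_, ?_⟩
    · rintro _ ⟨B, hB, rfl⟩
      exact hPQ B ((h𝒜 k).1 B hB)
    · rw [sUnion_image, ← preimage_sUnion, (h𝒜 k).2, preimage_univ]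
  obtain ⟨ℬ, hℬ, hcov⟩ := h _ hpull
  refine ⟨fun k => image f '' ℬ k, fun k => ⟨?_, (hℬ k).2.image _⟩, fun y => ?_⟩
  · rintro _ ⟨U, hU, rfl⟩
    obtain ⟨B, hB, rfl⟩ := (hℬ k).1 hU
    rwa [image_preimage_eq B hf]
  · obtain ⟨x, rfl⟩ := hf y
    filter_upwards [hcov x] with k ⟨U, hU, hxU⟩
    exact ⟨f '' U, mem_image_of_mem _ hU, mem_image_of_mem f hxU⟩

theorem stronglyThetaContinuous_image_hurewicz {X Y : Type*} [TopologicalSpace X]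
    [TopologicalSpace Y] (f : X → Y) (hf : Function.Surjective f)
    (hc : ∀ (x : X) (B : Set Y), IsOpen B → f x ∈ B →
      ∃ A : Set X, IsOpen A ∧ x ∈ A ∧ f '' closure A ⊆ B)
    (h : ThetaHurewicz X) : Hurewicz Y :=
  h.of_surjective hf fun _ => StronglyThetaContinuous.thetaOpen_preimage hc
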